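/- If a theory T α-omits a type Γ, then for every substitution θ : X → C over Δ with card(C_s) < α for each extended rigid sort s, and every set p of Δ[C]-sentences with card(p) < α such that T ∪ p is satisfiable, there exists γ ∈ Γ such that T ∪ p ∪ {@_z ¬θ(γ)} is satisfiable, where z is a fresh nominal variable. -/
import Mathlib


/-!
Forcing in hybrid-dynamic first-order logic with rigid symbols (Găină–Badia–Kowalski).
We work with an abstract fragment: `Nom` is the set of nominals, `Mo` the set of
(base) modalities, `Atom` the set of (extended) atomic sentences of the underlying
first-order layer (equations and relational atoms), and `Subst` the set of ground
substitutions used to interpret existential quantification.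
-/

namespace HDFOLR

/-- Structured actions over a set `Mo` of base modalities. -/
inductive Act (Mo : Type) : Type where
  | base : Mo → Act Mo
  | comp : Act Mo → Act Mo → Act Mo
  | union : Act Mo → Act Mo → Act Mo
  | star : Act Mo → Act Mo

/-- `a.pow n` is the `(n+1)`-fold sequential composition `a ⨟ ⋯ ⨟ a`. -/
def Act.pow {Mo : Type} (a : Act Mo) : ℕ → Act Mo
  | 0 => a
  | n + 1 => Act.comp a (a.pow n)

/-- Sentences of (a fragment of) hybrid-dynamic first-order logic with rigid symbols:
atoms, nominal sentences, possibility over structured actions, negation, finite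
disjunction, retrieve `@_k`, and existential quantification (rendered by its
ground instances, i.e. substitutions `θ : X → ∅`). -/
inductive Sen (Nom Mo Atom Subst : Type) : Type where
  | atom : Atom → Sen Nom Mo Atom Subst
  | nom : Nom → Sen Nom Mo Atom Subst
  | pos : Act Mo → Sen Nom Mo Atom Subst → Sen Nom Mo Atom Subst
  | neg : Sen Nom Mo Atom Subst → Sen Nom Mo Atom Subst
  | disj : (n : ℕ) → (Fin n → Sen Nom Mo Atom Subst) → Sen Nom Mo Atom Subst
  | ret : Nom → Sen Nom Mo Atom Subst → Sen Nom Mo Atom Subst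
  | ex : (Subst → Sen Nom Mo Atom Subst) → Sen Nom Mo Atom Subst

variable {Nom Mo Atom Subst : Type}

/-- Extended atomic sentences: atoms, nominals, and nominal relations `⟨λ⟩k'`. -/
def Sen.ExtAtomic : Sen Nom Mo Atom Subst → Prop
  | .atom _ => True
  | .nom _ => True
  | .pos (.base _) (.nom _) => True
  | _ => False

/-- Basic sentences: extended atomic sentences with retrieve applied at most once. -/
def Sen.Basic : Sen Nom Mo Atom Subst → Prop
  | .ret _ γ => γ.ExtAtomic
  | γ => γ.ExtAtomic

/-- `Reach f p k a k'`: the condition `p` forces `⟨a⟩k'` at `k`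
(clauses (2)–(4) of the definition of the forcing relation, together with the
atomic clause for nominal relations). -/
inductive Reach {P : Type} (f : P → Set (Sen Nom Mo Atom Subst)) :
    P → Nom → Act Mo → Nom → Prop where
  | base {p k m k'} :
      Sen.ret k (Sen.pos (Act.base m) (Sen.nom k')) ∈ f p → Reach f p k (Act.base m) k'
  | comp {p k k' k'' a₁ a₂} :
      Reach f p k a₁ k' → Reach f p k' a₂ k'' → Reach f p k (Act.comp a₁ a₂) k''
  | unionL {p k k'' a₁ a₂} : Reach f p k a₁ k'' → Reach f p k (Act.union a₁ a₂) k''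
  | unionR {p k k'' a₁ a₂} : Reach f p k a₂ k'' → Reach f p k (Act.union a₁ a₂) k''
  | star {p k k'' a} (n : ℕ) : Reach f p k (a.pow n) k'' → Reach f p k (Act.star a) k''

/-- The forcing relation `p ⊩^k γ` induced by `f : P → 𝒫(Sen_b(Δ))`. -/
def Forces {P : Type} [LE P] (f : P → Set (Sen Nom Mo Atom Subst)) :
    Sen Nom Mo Atom Subst → P → Nom → Prop
  | .atom a, p, k => Sen.ret k (Sen.atom a) ∈ f p
  | .nom k', p, k => Sen.ret k (Sen.nom k') ∈ f p
  | .pos a (.nom k''), p, k => Reach f p k a k''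
  | .pos a γ, p, k => ∃ k', Reach f p k a k' ∧ Forces f γ p k'
  | .neg γ, p, k => ∀ q, p ≤ q → ¬ Forces f γ q k
  | .disj _ g, p, k => ∃ i, Forces f (g i) p k
  | .ret k' γ, p, _ => Forces f γ p k'
  | .ex g, p, k => ∃ θ, Forces f (g θ) p k


/-- Kripke structures over the signature `(Nom, Mo, Atom)`: a nonempty set of worlds,
interpretations of nominals as worlds, of modalities as accessibility relations,
and of the first-order atoms as local truth at each world. -/
structure KModel (Nom Mo Atom : Type) : Type 1 where
  Wo : Type
  ne : Nonempty Wo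
  nomI : Nom → Wo
  modI : Mo → Wo → Wo → Prop
  atomI : Atom → Wo → Prop

variable {Nom Mo Atom Subst : Type}

/-- Accessibility relation interpreting structured actions. -/
def KModel.acc (M : KModel Nom Mo Atom) : Act Mo → M.Wo → M.Wo → Prop
  | .base m => M.modI m
  | .comp a b => Relation.Comp (M.acc a) (M.acc b)
  | .union a b => fun w w' => M.acc a w w' ∨ M.acc b w w'
  | .star a => Relation.ReflTransGen (M.acc a)

/-- Local satisfaction `(W,M) ⊨^w γ`. -/
def KModel.locSat (M : KModel Nom Mo Atom) : Sen Nom Mo Atom Subst → M.Wo → Prop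
  | .atom a, w => M.atomI a w
  | .nom k, w => M.nomI k = w
  | .pos a γ, w => ∃ w', M.acc a w w' ∧ M.locSat γ w'
  | .neg γ, w => ¬ M.locSat γ w
  | .disj _ g, w => ∃ i, M.locSat (g i) w
  | .ret k γ, _ => M.locSat γ (M.nomI k)
  | .ex g, w => ∃ θ, M.locSat (g θ) w

/-- Global satisfaction `(W,M) ⊨ γ`. -/
def KModel.gSat (M : KModel Nom Mo Atom) (γ : Sen Nom Mo Atom Subst) : Prop :=
  ∀ w, M.locSat γ w

/-- `(W,M) ⊨ T` for a set of sentences. -/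
def KModel.satSet (M : KModel Nom Mo Atom) (T : Set (Sen Nom Mo Atom Subst)) : Prop :=
  ∀ γ ∈ T, M.gSat γ

/-- Global semantic entailment `T ⊨ γ`. -/
def entails (T : Set (Sen Nom Mo Atom Subst)) (γ : Sen Nom Mo Atom Subst) : Prop :=
  ∀ M : KModel Nom Mo Atom, M.satSet T → M.gSat γ

/-- A forcing property `⟨P, ≤, f⟩` over the signature `(Nom, Mo, Atom, Subst)`. -/
structure ForcingProperty (P Nom Mo Atom Subst : Type) [PartialOrder P] [OrderBot P] where
  f : P → Set (Sen Nom Mo Atom Subst)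
  basic : ∀ p, ∀ γ ∈ f p, γ.Basic
  mono : ∀ ⦃p q : P⦄, p ≤ q → f p ⊆ f q
  decide : ∀ (p : P) (k : Nom) (γ : Sen Nom Mo Atom Subst), γ.ExtAtomic →
      entails (f p) (Sen.ret k γ) → ∃ q, p ≤ q ∧ Sen.ret k γ ∈ f q

open Cardinal

/-- Translation of sentences along a renaming of nominals (in particular along
signature inclusions `Δ ↪ Δ[C]` and substitutions `θ : X → C`). -/
def Sen.rename {Nom' : Type} (h : Nom → Nom') :
    Sen Nom Mo Atom Subst → Sen Nom' Mo Atom Subst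
  | .atom a => .atom a
  | .nom k => .nom (h k)
  | .pos a γ => .pos a (γ.rename h)
  | .neg γ => .neg (γ.rename h)
  | .disj n g => .disj n (fun i => (g i).rename h)
  | .ret k γ => .ret (h k) (γ.rename h)
  | .ex g => .ex (fun θ => (g θ).rename h)

/-- Expansion of a Kripke structure over `Δ` to `Δ[X]` along an interpretation
`u` of the variables `X` (of the extended rigid sort of nominals). -/
def KModel.expand {X : Type} (M : KModel Nom Mo Atom) (u : X → M.Wo) :
    KModel (Nom ⊕ X) Mo Atom where
  Wo := M.Wo
  ne := M.ne
  nomI := Sum.elim M.nomI u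
  modI := M.modI
  atomI := M.atomI

/-- A Kripke structure over `Δ` realizes a type `Γ ⊆ Sen(Δ[X])` if some expansion
of it to `Δ[X]` globally satisfies `Γ`. -/
def KModel.Realizes {X : Type} (M : KModel Nom Mo Atom)
    (Γ : Set (Sen (Nom ⊕ X) Mo Atom Subst)) : Prop :=
  ∃ u : X → M.Wo, ∀ γ ∈ Γ, (M.expand u).gSat γ

/-- `T` α-realizes the type `Γ ⊆ Sen(Δ[X])`: there are a set `C` of new constants
with `card C < α`, a substitution `θ : X → C`, and a set `p` of `Δ[C]`-sentences
with `card p < α`, such that `T ∪ p` is satisfiable and `T ∪ p ⊨ θ(Γ)`. -/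
def ARealizes (α : Cardinal) {X : Type} (T : Set (Sen Nom Mo Atom Subst))
    (Γ : Set (Sen (Nom ⊕ X) Mo Atom Subst)) : Prop :=
  ∃ (C : Type) (θ : X → Nom ⊕ C) (p : Set (Sen (Nom ⊕ C) Mo Atom Subst)),
    #C < α ∧ #↥p < α ∧
    (∃ M : KModel (Nom ⊕ C) Mo Atom,
      (∀ φ ∈ T, M.gSat (φ.rename Sum.inl)) ∧ ∀ φ ∈ p, M.gSat φ) ∧
    (∀ M : KModel (Nom ⊕ C) Mo Atom,
      (∀ φ ∈ T, M.gSat (φ.rename Sum.inl)) → (∀ φ ∈ p, M.gSat φ) →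
      ∀ γ ∈ Γ, M.gSat (γ.rename (Sum.elim Sum.inl θ)))



lemma rename_comp {Nom' Nom'' : Type} (h : Nom → Nom') (h' : Nom' → Nom'')
    (γ : Sen Nom Mo Atom Subst) :
    (γ.rename h).rename h' = γ.rename (h' ∘ h) := by
  induction γ <;> simp [Sen.rename, *]

lemma acc_expand {X' : Type} (M : KModel Nom Mo Atom) (u : X' → M.Wo)
    (a : Act Mo) : (M.expand u).acc a = M.acc a := by
  induction a with
  | base m => rfl
  | comp a b iha ihb =>
      show Relation.Comp ((M.expand u).acc a) ((M.expand u).acc b) = _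
      rw [iha, ihb]; rfl
  | union a b iha ihb =>
      show (fun w w' => (M.expand u).acc a w w' ∨ (M.expand u).acc b w w') = _
      rw [iha, ihb]; rfl
  | star a ih =>
      show Relation.ReflTransGen ((M.expand u).acc a) = _
      rw [ih]; rfl

lemma locSat_expand {X' : Type} (M : KModel Nom Mo Atom) (u : X' → M.Wo)
    (γ : Sen Nom Mo Atom Subst) (w : M.Wo) :
    (M.expand u).locSat (γ.rename Sum.inl) w ↔ M.locSat γ w := by
  induction γ generalizing w with
  | atom a => exact Iff.rfl
  | nom k => exact Iff.rfl
  | pos a γ ih =>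
      show (∃ w', (M.expand u).acc a w w' ∧ _) ↔ _
      rw [acc_expand]
      exact exists_congr fun w' => and_congr_right fun _ => ih w'
  | neg γ ih => exact not_congr (ih w)
  | disj n g ih => exact exists_congr fun i => ih i w
  | ret k γ ih => exact ih (M.nomI k)
  | ex g ih => exact exists_congr fun θ => ih θ w

/-- If `T` α-omits `Γ`, then for every substitution `θ : X → C` with `card C < α`
and every set `p` of `Δ[C]`-sentences with `card p < α` such that `T ∪ p` is
satisfiable, there is `γ ∈ Γ` such that `T ∪ p ∪ {@_z ¬θ(γ)}` is satisfiable,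
where `z` is a fresh nominal variable. -/
theorem aomits_neg_instance {X : Type} (α : Cardinal)
    (T : Set (Sen Nom Mo Atom Subst))
    (Γ : Set (Sen (Nom ⊕ X) Mo Atom Subst))
    (homit : ¬ ARealizes α T Γ) :
    ∀ (C : Type), #C < α → ∀ (θ : X → Nom ⊕ C)
      (p : Set (Sen (Nom ⊕ C) Mo Atom Subst)), #↥p < α →
      (∃ M : KModel (Nom ⊕ C) Mo Atom,
        (∀ φ ∈ T, M.gSat (φ.rename Sum.inl)) ∧ ∀ φ ∈ p, M.gSat φ) →
      ∃ γ ∈ Γ, ∃ M : KModel ((Nom ⊕ C) ⊕ Unit) Mo Atom,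
        (∀ φ ∈ T, M.gSat (φ.rename (Sum.inl ∘ Sum.inl))) ∧
        (∀ φ ∈ p, M.gSat (φ.rename Sum.inl)) ∧
        M.gSat (Sen.ret (Sum.inr ())
          (Sen.neg ((γ.rename (Sum.elim Sum.inl θ)).rename Sum.inl))) := by
  intro C hC θ p hp hsat
  have hne : ¬ (∀ M : KModel (Nom ⊕ C) Mo Atom,
      (∀ φ ∈ T, M.gSat (φ.rename Sum.inl)) → (∀ φ ∈ p, M.gSat φ) →
      ∀ γ ∈ Γ, M.gSat (γ.rename (Sum.elim Sum.inl θ))) :=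
    fun h => homit ⟨C, θ, p, hC, hp, hsat, h⟩
  push_neg at hne
  obtain ⟨M', hT', hp', γ, hγΓ, hns⟩ := hne
  rw [KModel.gSat] at hns
  push_neg at hns
  obtain ⟨w, hw⟩ := hns
  refine ⟨γ, hγΓ, M'.expand (fun _ : Unit => w), ?_, ?_, ?_⟩
  · intro φ hφ w0
    rw [← rename_comp]
    exact (locSat_expand M' _ (φ.rename Sum.inl) w0).mpr (hT' φ hφ w0)
  · intro φ hφ w0
    exact (locSat_expand M' _ φ w0).mpr (hp' φ hφ w0)
  · intro w0
    show ¬ (M'.expand fun _ : Unit => w).locSat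
      ((γ.rename (Sum.elim Sum.inl θ)).rename Sum.inl) w
    rw [locSat_expand]
    exact hw

end HDFOLR
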